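/- arXiv:1908.11083 — 2 statements merged into one kernel-verified Lean document; each statement's English description precedes it below -/
import Mathlib

section
/- Let Φ₁ and Φ₂ be convex growth functions with Φ₂ of upper type q ≥ 1 and t ↦ Φ₂(t)/t nondecreasing, and assume Φ₂/Φ₁ is nondecreasing on (0,∞). Then the function Φ₃ defined by Φ₃(0)=0 and Φ₃(t) = 1 / (Φ₂∘Φ₁⁻¹(1/t)) for t>0 belongs to the class 𝒰; in particular Φ₃ is of upper type q and t ↦ Φ₃(t)/t is nondecreasing. -/
open MeasureTheory Complex Set
open scoped ENNReal Real

noncomputable section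

/-- The upper half-plane `ℂ₊`. -/
def UHP : Set ℂ := {z : ℂ | 0 < z.im}

/-- A growth function: a continuous nondecreasing surjection from `[0, ∞)` onto itself. -/
def IsGrowth (Φ : ℝ → ℝ) : Prop :=
  ContinuousOn Φ (Ici 0) ∧ MonotoneOn Φ (Ici 0) ∧
    MapsTo Φ (Ici 0) (Ici 0) ∧ SurjOn Φ (Ici 0) (Ici 0)

/-- Generalized inverse `Φ⁻¹(s) = inf {t ≥ 0 : Φ t ≥ s}`. -/
def invF (Φ : ℝ → ℝ) (s : ℝ) : ℝ := sInf {t : ℝ | 0 ≤ t ∧ s ≤ Φ t}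

/-- `Φ` is of upper type `q`. -/
def UpperType (Φ : ℝ → ℝ) (q : ℝ) : Prop :=
  ∃ C > (0 : ℝ), ∀ s > (0 : ℝ), ∀ t ≥ (1 : ℝ), Φ (s * t) ≤ C * t ^ q * Φ s

/-- The class `𝒰`: growth functions of some upper type `q ≥ 1` with `t ↦ Φ t / t`
nondecreasing. -/
def ClassU (Φ : ℝ → ℝ) : Prop :=
  IsGrowth Φ ∧ ∃ q ≥ (1 : ℝ), UpperType Φ q ∧ MonotoneOn (fun t => Φ t / t) (Ioi 0)

/-- The class `𝒰̃`: members of `𝒰` of upper type `q` satisfying conditions (a1), (a2), (a3). -/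
def ClassUt (Φ : ℝ → ℝ) : Prop :=
  IsGrowth Φ ∧ ∃ q ≥ (1 : ℝ), UpperType Φ q ∧ MonotoneOn (fun t => Φ t / t) (Ioi 0) ∧
    (∃ C₁ > (0 : ℝ), ∀ s > (0 : ℝ), ∀ t > (0 : ℝ), Φ (s * t) ≤ C₁ * Φ s * Φ t) ∧
    (∃ C₂ > (0 : ℝ), ∀ a ≥ (1 : ℝ), ∀ b ≥ (1 : ℝ), Φ (a / b) ≤ C₂ * Φ a / b ^ q) ∧
    (∃ C₃ > (0 : ℝ), ∀ a b : ℝ, 0 < a → a ≤ b → b ≤ 1 → Φ (a / b) ≤ C₃ * Φ a / Φ b)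

/-- The `Δ₂`-condition. -/
def Delta2 (Φ : ℝ → ℝ) : Prop := ∃ K > (1 : ℝ), ∀ t ≥ (0 : ℝ), Φ (2 * t) ≤ K * Φ t

/-- The complementary function `Ψ(s) = sup_{t ≥ 0} (st - Φ t)`, valued in `ℝ≥0∞`. -/
def complementaryFn (Φ : ℝ → ℝ) (s : ℝ) : ℝ≥0∞ :=
  ⨆ (t : ℝ) (_ : 0 ≤ t), ENNReal.ofReal (s * t - Φ t)

/-- The `∇₂`-condition: both `Φ` and its complementary function satisfy `Δ₂`. -/
def Nabla2 (Φ : ℝ → ℝ) : Prop :=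
  Delta2 Φ ∧ ∃ K > (1 : ℝ), ∀ s ≥ (0 : ℝ),
    complementaryFn Φ (2 * s) ≤ ENNReal.ofReal K * complementaryFn Φ s

/-- The Carleson square over the interval `(a, b)`. -/
def carlesonSq (a b : ℝ) : Set ℂ := {z : ℂ | z.re ∈ Ioo a b ∧ z.im ∈ Ioo 0 (b - a)}

/-- The Luxembourg (quasi)-norm of `g` in `L^Φ(μ)`. -/
def luxNorm {X : Type*} [MeasurableSpace X] (Φ : ℝ → ℝ) (μ : Measure X) (g : X → ℂ) : ℝ≥0∞ :=
  ⨅ (l : ℝ) (_ : 0 < l ∧ ∫⁻ x, ENNReal.ofReal (Φ (‖g x‖ / l)) ∂μ ≤ 1),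
    ENNReal.ofReal l

/-- The Hardy–Orlicz (Luxembourg) norm `sup_{y > 0} ‖f(· + iy)‖_{L^Φ}^{lux}`. -/
def hardyNorm (Φ : ℝ → ℝ) (f : ℂ → ℂ) : ℝ≥0∞ :=
  ⨆ (y : ℝ) (_ : 0 < y),
    luxNorm Φ (volume : Measure ℝ) (fun x => f ((x : ℂ) + (y : ℂ) * Complex.I))

/-- Membership in the Hardy–Orlicz space `H^Φ(ℂ₊)`. -/
def MemHardy (Φ : ℝ → ℝ) (f : ℂ → ℂ) : Prop :=
  DifferentiableOn ℂ f UHP ∧ hardyNorm Φ f < ⊤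

/-- The measure `dV_α = y^α dx dy` on the upper half-plane. -/
def bergMeasure (α : ℝ) : Measure ℂ :=
  ((volume : Measure ℂ).restrict UHP).withDensity fun z => ENNReal.ofReal (z.im ^ α)

/-- The Luxembourg (quasi)-norm of the Bergman–Orlicz space `A_α^Φ(ℂ₊)`. -/
def bergLux (Φ : ℝ → ℝ) (α : ℝ) (f : ℂ → ℂ) : ℝ≥0∞ := luxNorm Φ (bergMeasure α) f

/-- Membership in the Bergman–Orlicz space `A_α^Φ(ℂ₊)`. -/
def MemBergman (Φ : ℝ → ℝ) (α : ℝ) (f : ℂ → ℂ) : Prop :=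
  DifferentiableOn ℂ f UHP ∧
    ∫⁻ z, ENNReal.ofReal (Φ (‖f z‖)) ∂(bergMeasure α) < ⊤

/-- `g` is a pointwise multiplier from `H^{Φ₁}(ℂ₊)` to `A_α^{Φ₂}(ℂ₊)`. -/
def MultHB (Φ₁ Φ₂ : ℝ → ℝ) (α : ℝ) (g : ℂ → ℂ) : Prop :=
  DifferentiableOn ℂ g UHP ∧
    ∃ C > (0 : ℝ), ∀ f : ℂ → ℂ, MemHardy Φ₁ f →
      bergLux Φ₂ α (fun z => f z * g z) ≤ ENNReal.ofReal C * hardyNorm Φ₁ f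

/-- `g` is a pointwise multiplier from `A_α^{Φ₁}(ℂ₊)` to `A_β^{Φ₂}(ℂ₊)`. -/
def MultBB (Φ₁ Φ₂ : ℝ → ℝ) (α β : ℝ) (g : ℂ → ℂ) : Prop :=
  DifferentiableOn ℂ g UHP ∧
    ∃ C > (0 : ℝ), ∀ f : ℂ → ℂ, MemBergman Φ₁ α f →
      bergLux Φ₂ β (fun z => f z * g z) ≤ ENNReal.ofReal C * bergLux Φ₁ α f

/-- Extension of a growth function to `ℝ≥0∞`. -/
def PhiE (Φ : ℝ → ℝ) (x : ℝ≥0∞) : ℝ≥0∞ :=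
  if x = ⊤ then ⊤ else ENNReal.ofReal (Φ x.toReal)

/-- The Hardy–Littlewood maximal function on `ℝ`. -/
def maximalR (f : ℝ → ℂ) (x : ℝ) : ℝ≥0∞ :=
  ⨆ (a : ℝ) (b : ℝ) (_ : a ≤ x ∧ x ≤ b ∧ a < b),
    (∫⁻ s in Ioo a b, (‖f s‖₊ : ℝ≥0∞)) / ENNReal.ofReal (b - a)

/-- The nontangential maximal function `f*` of `f : ℂ₊ → ℂ`. -/
def ntMax (f : ℂ → ℂ) (x : ℝ) : ℝ≥0∞ :=
  ⨆ (z : ℂ) (_ : 0 < z.im ∧ |z.re - x| < z.im), (‖f z‖₊ : ℝ≥0∞)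

/-- The Luxembourg norm of the nontangential maximal function `f*` in `L^Φ(ℝ)`. -/
def ntLux (Φ : ℝ → ℝ) (f : ℂ → ℂ) : ℝ≥0∞ :=
  ⨅ (l : ℝ) (_ : 0 < l ∧ ∫⁻ x, PhiE Φ (ntMax f x / ENNReal.ofReal l) ≤ 1), ENNReal.ofReal l

/-- The weighted Hardy–Littlewood maximal function `𝓜_α` on `ℂ₊`. -/
def maximalBerg (α : ℝ) (f : ℂ → ℂ) (z : ℂ) : ℝ≥0∞ :=
  ⨆ (a : ℝ) (b : ℝ) (_ : a < b ∧ z ∈ carlesonSq a b),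
    (∫⁻ w in carlesonSq a b, (‖f w‖₊ : ℝ≥0∞) ∂(bergMeasure α)) /
      bergMeasure α (carlesonSq a b)

/-- The function `Φ₃(t) = 1 / (Φ₂ ∘ Φ₁⁻¹)(1/t)` for `t > 0`, `Φ₃(0) = 0`. -/
def Phi3 (Φ₁ Φ₂ : ℝ → ℝ) (t : ℝ) : ℝ :=
  if t ≤ 0 then 0 else 1 / Φ₂ (invF Φ₁ (1 / t))

/-- The Beta function `B(m, n) = ∫₀^∞ u^{m-1}/(1+u)^{m+n} du`. -/
def betaFn (m n : ℝ) : ℝ := ∫ u in Ioi (0 : ℝ), u ^ (m - 1) / (1 + u) ^ (m + n)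

lemma growth_zero {Φ : ℝ → ℝ} (h : IsGrowth Φ) : Φ 0 = 0 := by
  obtain ⟨-, hm, hmap, hs⟩ := h
  obtain ⟨w, hw, hΦw⟩ := hs (mem_Ici.mpr le_rfl)
  have h1 : Φ 0 ≤ Φ w := hm (mem_Ici.mpr le_rfl) hw hw
  have h2 : (0:ℝ) ≤ Φ 0 := hmap (mem_Ici.mpr le_rfl)
  linarith [hΦw.le, hΦw.ge]

lemma growth_pos {Φ : ℝ → ℝ} {q : ℝ} (h : IsGrowth Φ) (hu : UpperType Φ q)
    {s : ℝ} (hs : 0 < s) : 0 < Φ s := by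
  obtain ⟨hc, hm, hmap, hsurj⟩ := h
  rcases lt_or_ge 0 (Φ s) with h' | h'
  · exact h'
  have hs0 : Φ s = 0 := le_antisymm h' (hmap hs.le)
  obtain ⟨w, hw, hΦw⟩ := hsurj (show (1:ℝ) ∈ Ici 0 by norm_num)
  obtain ⟨C, hC, hCu⟩ := hu
  rcases le_or_gt w s with hws | hws
  · have := hm hw hs.le hws
    rw [hΦw, hs0] at this; linarith
  · have ht1 : (1:ℝ) ≤ w / s := (one_le_div hs).mpr hws.le
    have := hCu s hs (w / s) ht1
    rw [mul_div_cancel₀ _ hs.ne', hs0, hΦw] at this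
    nlinarith

lemma invF_le {Φ : ℝ → ℝ} {s x : ℝ} (hx : 0 ≤ x) (hsx : s ≤ Φ x) : invF Φ s ≤ x :=
  csInf_le ⟨0, fun _ ht => ht.1⟩ ⟨hx, hsx⟩

lemma invF_spec {Φ : ℝ → ℝ} (h : IsGrowth Φ) {s : ℝ} (hs : 0 < s) :
    0 < invF Φ s ∧ Φ (invF Φ s) = s := by
  obtain ⟨hc, hm, hmap, hsurj⟩ := h
  set S : Set ℝ := {t : ℝ | 0 ≤ t ∧ s ≤ Φ t} with hS
  obtain ⟨w, hw, hΦw⟩ := hsurj (show s ∈ Ici 0 from hs.le)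
  have hne : S.Nonempty := ⟨w, hw, hΦw.ge⟩
  have hbdd : BddBelow S := ⟨0, fun _ ht => ht.1⟩
  have hclosed : IsClosed S := by
    have : S = Ici 0 ∩ Φ ⁻¹' (Ici s) := by
      ext t; simp [hS, Set.mem_Ici, and_comm]
    rw [this]
    exact hc.preimage_isClosed_of_isClosed isClosed_Ici isClosed_Ici
  have hmem : sInf S ∈ S := hclosed.csInf_mem hne hbdd
  have hle : Φ (sInf S) ≤ s := by
    have h1 : sInf S ≤ w := csInf_le hbdd ⟨hw, hΦw.ge⟩
    calc Φ (sInf S) ≤ Φ w := hm hmem.1 hw h1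
    _ = s := hΦw
  have heq : Φ (invF Φ s) = s := le_antisymm hle hmem.2
  refine ⟨?_, heq⟩
  rcases hmem.1.lt_or_eq with h' | h'
  · exact h'
  · exfalso
    have : Φ (invF Φ s) = 0 := by
      rw [invF, ← h', growth_zero ⟨hc, hm, hmap, hsurj⟩]
    rw [heq] at this; linarith

/-- `Φ₃(t) = 1 / (Φ₂ ∘ Φ₁⁻¹)(1/t)` belongs to the class `𝒰`: it is of upper type `q` and
`t ↦ Φ₃ t / t` is nondecreasing. -/
theorem phi3_mem_classU
    (Φ₁ Φ₂ : ℝ → ℝ) (q : ℝ) (hq : 1 ≤ q)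
    (h1g : IsGrowth Φ₁) (h2g : IsGrowth Φ₂)
    (h1c : ConvexOn ℝ (Ici 0) Φ₁) (h2c : ConvexOn ℝ (Ici 0) Φ₂)
    (h2u : UpperType Φ₂ q) (h2m : MonotoneOn (fun t => Φ₂ t / t) (Ioi 0))
    (hratio : MonotoneOn (fun t => Φ₂ t / Φ₁ t) (Ioi 0)) :
    (∃ C > (0 : ℝ), ∀ s > (0 : ℝ), ∀ t ≥ (1 : ℝ),
        Phi3 Φ₁ Φ₂ (s * t) ≤ C * t ^ q * Phi3 Φ₁ Φ₂ s) ∧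
      MonotoneOn (fun t => Phi3 Φ₁ Φ₂ t / t) (Ioi 0) := by
  have hΦ10 : Φ₁ 0 = 0 := growth_zero h1g
  constructor
  · obtain ⟨C, hC, hCu⟩ := h2u
    refine ⟨C, hC, fun s hs t ht => ?_⟩
    have hst : 0 < s * t := mul_pos hs (by linarith)
    set a := invF Φ₁ (1 / (s * t)) with ha
    set b := invF Φ₁ (1 / s) with hb
    obtain ⟨hapos, haΦ⟩ := invF_spec h1g (show 0 < 1 / (s * t) by positivity)
    obtain ⟨hbpos, hbΦ⟩ := invF_spec h1g (show 0 < 1 / s by positivity)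
    -- convexity: t * Φ₁ a ≤ Φ₁ (t * a)
    have hconv : t * Φ₁ a ≤ Φ₁ (t * a) := by
      have ht0 : (0:ℝ) < t := by linarith
      have h1 : Φ₁ ((1/t) • (t * a) + (1 - 1/t) • (0:ℝ)) ≤
          (1/t) * Φ₁ (t * a) + (1 - 1/t) * Φ₁ 0 := by
        refine h1c.2 ?_ ?_ (by positivity) ?_ (by ring)
        · exact mem_Ici.mpr (mul_nonneg ht0.le hapos.le)
        · exact mem_Ici.mpr le_rfl
        · have : 1/t ≤ 1 := by rw [div_le_one ht0]; exact ht
          linarith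
      have harg : (1/t) • (t * a) + (1 - 1/t) • (0:ℝ) = a := by
        simp only [smul_eq_mul, mul_zero, add_zero]
        field_simp
      rw [harg, hΦ10, mul_zero, add_zero] at h1
      calc t * Φ₁ a ≤ t * ((1/t) * Φ₁ (t * a)) := by
            exact mul_le_mul_of_nonneg_left h1 ht0.le
      _ = Φ₁ (t * a) := by field_simp
    have hba : b ≤ t * a := by
      apply invF_le (mul_nonneg (by linarith : (0:ℝ) ≤ t) hapos.le)
      calc (1:ℝ)/s = t * (1/(s*t)) := by field_simp
      _ = t * Φ₁ a := by rw [haΦ]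
      _ ≤ Φ₁ (t * a) := hconv
    have hΦ2m := h2g.2.1
    have hkey : Φ₂ b ≤ C * t ^ q * Φ₂ a := by
      calc Φ₂ b ≤ Φ₂ (t * a) := hΦ2m (mem_Ici.mpr hbpos.le) (mem_Ici.mpr (mul_nonneg (by linarith : (0:ℝ) ≤ t) hapos.le)) hba
      _ = Φ₂ (a * t) := by ring_nf
      _ ≤ C * t ^ q * Φ₂ a := hCu a hapos t ht
    have hΦ2a : 0 < Φ₂ a := growth_pos h2g ⟨C, hC, hCu⟩ hapos
    have hΦ2b : 0 < Φ₂ b := growth_pos h2g ⟨C, hC, hCu⟩ hbpos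
    rw [Phi3, Phi3, if_neg (not_le.mpr hst), if_neg (not_le.mpr hs), ← ha, ← hb]
    rw [div_le_iff₀ hΦ2a, mul_comm]
    calc (1:ℝ) = Φ₂ b * (1/Φ₂ b) := by field_simp
    _ ≤ (C * t ^ q * Φ₂ a) * (1/Φ₂ b) := by
        apply mul_le_mul_of_nonneg_right hkey (by positivity)
    _ = Φ₂ a * (C * t ^ q * (1 / Φ₂ b)) := by ring
  · intro t₁ ht₁ t₂ ht₂ h12
    simp only [mem_Ioi] at ht₁ ht₂
    set u₁ := invF Φ₁ (1 / t₁) with hu₁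
    set u₂ := invF Φ₁ (1 / t₂) with hu₂
    obtain ⟨hu1pos, hu1Φ⟩ := invF_spec h1g (show 0 < 1 / t₁ by positivity)
    obtain ⟨hu2pos, hu2Φ⟩ := invF_spec h1g (show 0 < 1 / t₂ by positivity)
    have h21 : u₂ ≤ u₁ := by
      apply invF_le hu1pos.le
      rw [hu1Φ]
      exact one_div_le_one_div_of_le ht₁ h12
    have hr := hratio (mem_Ioi.mpr hu2pos) (mem_Ioi.mpr hu1pos) h21
    simp only at hr
    have hΦ2u1 : 0 < Φ₂ u₁ := growth_pos h2g h2u hu1pos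
    have hΦ2u2 : 0 < Φ₂ u₂ := growth_pos h2g h2u hu2pos
    rw [hu1Φ, hu2Φ] at hr
    -- hr : Φ₂ u₂ / (1/t₂) ≤ Φ₂ u₁ / (1/t₁), i.e. t₂ Φ₂ u₂ ≤ t₁ Φ₂ u₁
    rw [div_div_eq_mul_div, div_one, div_div_eq_mul_div, div_one] at hr
    simp only [Phi3, if_neg (not_le.mpr ht₁), if_neg (not_le.mpr ht₂), ← hu₁, ← hu₂]
    rw [div_div, div_div, div_le_div_iff₀ (by positivity) (by positivity)]
    nlinarith
end
end

section
/- Let Φ be a convex growth function and α > −1. Then there exists a constant C = C_α > 0 such that for every f ∈ A_α^Φ(ℂ₊) and every z = x+iy ∈ ℂ₊, |f(z)| ≤ C Φ⁻¹(1/y^{α+2}) ‖f‖_{Φ,α}^{lux}. -/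
open MeasureTheory Complex Set
open scoped ENNReal Real

noncomputable section

section AuxLemmas

open Metric

lemma circleMean (f : ℂ → ℂ) (c : ℂ) {R : ℝ} (hR : 0 < R)
    (hf : ContinuousOn f (closedBall c R))
    (hd : ∀ w ∈ ball c R, DifferentiableAt ℂ f w) :
    ∫ θ in (0:ℝ)..(2*π), f (circleMap c R θ) = (2*π : ℝ) • f c := by
  have h := Complex.circleIntegral_sub_center_inv_smul_of_differentiable_on_off_countable hR
    Set.countable_empty hf (fun w hw => hd w hw.1)
  simp only [circleIntegral] at h
  have key : ∀ θ : ℝ, deriv (circleMap c R) θ • (circleMap c R θ - c)⁻¹ • f (circleMap c R θ)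
      = I • f (circleMap c R θ) := by
    intro θ
    have h0 : circleMap 0 R θ ≠ 0 := circleMap_ne_center hR.ne'
    rw [deriv_circleMap, circleMap_sub_center, smul_eq_mul, smul_eq_mul, smul_eq_mul]
    field_simp
  simp only [key] at h
  rw [intervalIntegral.integral_smul] at h
  have h2 : I • ((2*π : ℝ) • f c) = (2 * ↑π * I) • f c := by
    simp only [smul_eq_mul, Complex.real_smul]
    push_cast
    ring
  have := h.trans h2.symm
  exact smul_right_injective ℂ I_ne_zero this

lemma circleMeanIoo (f : ℂ → ℂ) (c : ℂ) {R : ℝ} (hR : 0 < R)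
    (hf : ContinuousOn f (closedBall c R))
    (hd : ∀ w ∈ ball c R, DifferentiableAt ℂ f w) :
    ∫ θ in Ioo (-π) π, f (circleMap c R θ) = (2*π : ℝ) • f c := by
  have hper : Function.Periodic (fun θ => f (circleMap c R θ)) (2*π) :=
    fun θ => by simp [periodic_circleMap c R θ]
  have h1 := hper.intervalIntegral_add_eq (-π) 0
  have h2 : -π + 2*π = π := by ring
  rw [h2, zero_add] at h1
  rw [← MeasureTheory.integral_Ioc_eq_integral_Ioo,
    ← intervalIntegral.integral_of_le (by linarith [Real.pi_pos] : -π ≤ π), h1]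
  exact circleMean f c hR hf hd

lemma diskMean (f : ℂ → ℂ) (c : ℂ) {R : ℝ} (hR : 0 < R)
    (hf : ContinuousOn f (closedBall c R))
    (hd : ∀ w ∈ ball c R, DifferentiableAt ℂ f w) :
    ∫ w in ball c R, f w = (π * R^2 : ℝ) • f c := by
  have h1 : ∫ w in ball c R, f w
      = ∫ w, Set.indicator (ball (0:ℂ) R) (fun w => f (c + w)) w := by
    rw [← integral_indicator measurableSet_ball]
    rw [← integral_add_left_eq_self (fun w => Set.indicator (ball c R) f w) c]
    congr 1
    funext w
    have hmem : c + w ∈ ball c R ↔ w ∈ ball (0:ℂ) R := by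
      simp [mem_ball, dist_eq_norm, add_sub_cancel_left]
    by_cases hw : w ∈ ball (0:ℂ) R
    · rw [Set.indicator_of_mem (hmem.mpr hw), Set.indicator_of_mem hw]
    · rw [Set.indicator_of_notMem (fun hmem' => hw (hmem.mp hmem')),
        Set.indicator_of_notMem hw]
  have h2 : ∫ w, Set.indicator (ball (0:ℂ) R) (fun w => f (c + w)) w
      = ∫ p in polarCoord.target,
          p.1 • Set.indicator (ball (0:ℂ) R) (fun w => f (c + w)) (Complex.polarCoord.symm p) :=
    (Complex.integral_comp_polarCoord_symm _).symm
  have hsub : Ioo (0:ℝ) R ×ˢ Ioo (-π) π ⊆ polarCoord.target := by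
    rw [polarCoord_target]
    exact Set.prod_mono Ioo_subset_Ioi_self subset_rfl
  have hcm : ∀ p : ℝ × ℝ, Complex.polarCoord.symm p = circleMap 0 p.1 p.2 := by
    intro p
    simp only [Complex.polarCoord_symm_apply, circleMap, Complex.exp_mul_I, zero_add]
    push_cast
    ring
  have h3 : ∫ p in polarCoord.target,
        p.1 • Set.indicator (ball (0:ℂ) R) (fun w => f (c + w)) (Complex.polarCoord.symm p)
      = ∫ p in Ioo (0:ℝ) R ×ˢ Ioo (-π) π, p.1 • f (c + circleMap 0 p.1 p.2) := by
    have hEq : Set.EqOn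
        (fun p : ℝ × ℝ =>
          p.1 • Set.indicator (ball (0:ℂ) R) (fun w => f (c + w)) (Complex.polarCoord.symm p))
        (Set.indicator (Ioo (0:ℝ) R ×ˢ Ioo (-π) π)
          (fun p => p.1 • f (c + circleMap 0 p.1 p.2))) polarCoord.target := by
      intro p hp
      rw [polarCoord_target] at hp
      obtain ⟨hp1, hp2⟩ := hp
      dsimp only
      have habs : ‖Complex.polarCoord.symm p‖ = p.1 := by
        rw [Complex.norm_polarCoord_symm, abs_of_pos hp1]
      by_cases hlt : p.1 < R
      · rw [Set.indicator_of_mem, Set.indicator_of_mem, hcm]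
        · exact ⟨⟨hp1, hlt⟩, hp2⟩
        · rw [mem_ball_zero_iff, habs]; exact hlt
      · rw [Set.indicator_of_notMem, Set.indicator_of_notMem, smul_zero]
        · intro hmem'
          exact hlt hmem'.1.2
        · rw [mem_ball_zero_iff, habs]; exact hlt
    rw [setIntegral_congr_fun polarCoord.open_target.measurableSet hEq,
      setIntegral_indicator (measurableSet_Ioo.prod measurableSet_Ioo),
      Set.inter_eq_self_of_subset_right hsub]
  have hcont : Continuous fun p : ℝ × ℝ => c + circleMap 0 p.1 p.2 := by
    simp only [circleMap, zero_add]
    fun_prop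
  have hint : IntegrableOn (fun p : ℝ × ℝ => p.1 • f (c + circleMap 0 p.1 p.2))
      (Icc (0:ℝ) R ×ˢ Icc (-π) π) volume := by
    apply ContinuousOn.integrableOn_compact (isCompact_Icc.prod isCompact_Icc)
    apply ContinuousOn.smul continuous_fst.continuousOn
    apply hf.comp hcont.continuousOn
    intro p hp
    rw [mem_closedBall, dist_eq_norm, add_sub_cancel_left,
      norm_circleMap_zero]
    rw [_root_.abs_of_nonneg hp.1.1]
    exact hp.1.2
  have h4 : ∫ p in Ioo (0:ℝ) R ×ˢ Ioo (-π) π, p.1 • f (c + circleMap 0 p.1 p.2)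
      = ∫ a in Ioo (0:ℝ) R, ∫ b in Ioo (-π) π, a • f (c + circleMap 0 a b) := by
    rw [Measure.volume_eq_prod]
    apply setIntegral_prod
    rw [← Measure.volume_eq_prod]
    exact hint.mono_set (Set.prod_mono Ioo_subset_Icc_self Ioo_subset_Icc_self)
  have h5 : ∀ a ∈ Ioo (0:ℝ) R,
      ∫ b in Ioo (-π) π, a • f (c + circleMap 0 a b) = (a * (2*π)) • f c := by
    intro a ha
    have hcirc : ∀ b : ℝ, c + circleMap 0 a b = circleMap c a b := by
      intro b
      rw [← circleMap_sub_center c a b]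
      ring
    simp_rw [hcirc]
    rw [integral_smul]
    rw [circleMeanIoo f c ha.1 (hf.mono (closedBall_subset_closedBall ha.2.le))
      (fun w hw => hd w (ball_subset_ball ha.2.le hw))]
    rw [smul_smul]
  rw [h1, h2, h3, h4, setIntegral_congr_fun measurableSet_Ioo h5]
  rw [integral_smul_const]
  congr 1
  rw [← MeasureTheory.integral_Ioc_eq_integral_Ioo,
    ← intervalIntegral.integral_of_le hR.le, intervalIntegral.integral_mul_const, integral_id]
  ring

lemma volBall (c : ℂ) {R : ℝ} (hR : 0 < R) :
    (volume (ball c R)).toReal = π * R^2 := by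
  have h := diskMean (fun _ => (1:ℂ)) c hR continuousOn_const (fun w _ => differentiableAt_const _)
  rw [setIntegral_const] at h
  have h2 : ((volume (ball c R)).toReal : ℂ) = ((π * R^2 : ℝ) : ℂ) := by
    exact_mod_cast (by simpa [Complex.real_smul] using h :
      ((volume.real (ball c R) : ℝ) : ℂ) = ((π * R^2 : ℝ) : ℂ))
  exact_mod_cast h2

variable {Φ : ℝ → ℝ}

lemma phi_zero (hg : IsGrowth Φ) : Φ 0 = 0 := by
  obtain ⟨hcont, hmono, hmap, hsurj⟩ := hg
  obtain ⟨t, ht, hΦt⟩ := hsurj (mem_Ici.mpr (le_refl (0:ℝ)))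
  have h1 : Φ 0 ≤ Φ t := hmono (mem_Ici.mpr (le_refl 0)) ht ht
  have h2 : (0:ℝ) ≤ Φ 0 := hmap (mem_Ici.mpr (le_refl 0))
  rw [hΦt] at h1
  linarith

lemma invF_mem (hg : IsGrowth Φ) {s : ℝ} (hs : 0 ≤ s) :
    0 ≤ invF Φ s ∧ s ≤ Φ (invF Φ s) := by
  obtain ⟨hcont, hmono, hmap, hsurj⟩ := hg
  have hA : {t : ℝ | 0 ≤ t ∧ s ≤ Φ t} = Ici 0 ∩ Φ ⁻¹' (Ici s) := by
    ext t; simp [mem_Ici, mem_preimage]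
  have hClosed : IsClosed {t : ℝ | 0 ≤ t ∧ s ≤ Φ t} := by
    rw [hA]
    exact hcont.preimage_isClosed_of_isClosed isClosed_Ici isClosed_Ici
  obtain ⟨t, ht, hΦt⟩ := hsurj hs
  have hNe : Set.Nonempty {t : ℝ | 0 ≤ t ∧ s ≤ Φ t} := ⟨t, ht, hΦt.ge⟩
  have hBdd : BddBelow {t : ℝ | 0 ≤ t ∧ s ≤ Φ t} := ⟨0, fun x hx => hx.1⟩
  have hmem := hClosed.csInf_mem hNe hBdd
  exact ⟨hmem.1, hmem.2⟩

lemma le_invF (hg : IsGrowth Φ) {u s : ℝ} (hu : 0 ≤ u) (hus : Φ u < s) : u ≤ invF Φ s := by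
  have hs : 0 ≤ s := le_trans (hg.2.2.1 hu) hus.le
  obtain ⟨t, ht, hΦt⟩ := hg.2.2.2 hs
  apply le_csInf (⟨t, ⟨ht, hΦt.ge⟩⟩ : Set.Nonempty {t : ℝ | 0 ≤ t ∧ s ≤ Φ t})
  intro b hb
  by_contra hlt
  push_neg at hlt
  have : Φ b ≤ Φ u := hg.2.1 hb.1 hu hlt.le
  linarith [hb.2]

lemma invF_scale (hg : IsGrowth Φ) (hcvx : ConvexOn ℝ (Ici 0) Φ) {M s : ℝ}
    (hM : 1 ≤ M) (hs : 0 ≤ s) : invF Φ (M * s) ≤ M * invF Φ s := by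
  obtain ⟨h0, hΦ⟩ := invF_mem hg hs
  set t0 := invF Φ s with ht0
  have hM0 : 0 < M := lt_of_lt_of_le one_pos hM
  have hMinv : M⁻¹ ≤ 1 := by
    rw [← one_div]
    exact (div_le_one hM0).mpr hM
  have hconv : Φ t0 ≤ M⁻¹ * Φ (M * t0) := by
    have h1 : (M * t0) ∈ Ici (0:ℝ) := mul_nonneg hM0.le h0
    have h2 : (0:ℝ) ∈ Ici (0:ℝ) := mem_Ici.mpr (le_refl 0)
    have h3 := hcvx.2 h1 h2 (by positivity : (0:ℝ) ≤ M⁻¹)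
      (by linarith : (0:ℝ) ≤ 1 - M⁻¹) (by ring)
    have h4 : M⁻¹ • (M * t0) + (1 - M⁻¹) • (0:ℝ) = t0 := by
      simp only [smul_eq_mul, mul_zero, add_zero]
      field_simp
    rw [h4] at h3
    simpa [smul_eq_mul, phi_zero hg] using h3
  have h5 : M * Φ t0 ≤ Φ (M * t0) := by
    have := mul_le_mul_of_nonneg_left hconv hM0.le
    rwa [← mul_assoc, mul_inv_cancel₀ hM0.ne', one_mul] at this
  have hmem : M * t0 ∈ {t : ℝ | 0 ≤ t ∧ M * s ≤ Φ t} :=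
    ⟨mul_nonneg hM0.le h0, le_trans (mul_le_mul_of_nonneg_left hΦ hM0.le) h5⟩
  exact csInf_le ⟨0, fun x hx => hx.1⟩ hmem

lemma phi_div_le (hg : IsGrowth Φ) (hcvx : ConvexOn ℝ (Ici 0) Φ) {t l : ℝ}
    (ht : 0 ≤ t) (hl : 1 ≤ l) : Φ (t / l) ≤ Φ t / l := by
  have hl0 : 0 < l := lt_of_lt_of_le one_pos hl
  have hlinv : l⁻¹ ≤ 1 := by
    rw [← one_div]
    exact (div_le_one hl0).mpr hl
  have h3 := hcvx.2 (mem_Ici.mpr ht) (mem_Ici.mpr (le_refl (0:ℝ)))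
    (by positivity : (0:ℝ) ≤ l⁻¹) (by linarith : (0:ℝ) ≤ 1 - l⁻¹) (by ring)
  have h4 : l⁻¹ • t + (1 - l⁻¹) • (0:ℝ) = t / l := by
    simp only [smul_eq_mul, mul_zero, add_zero]
    field_simp
  rw [h4] at h3
  have h5 : Φ (t / l) ≤ l⁻¹ * Φ t := by simpa [smul_eq_mul, phi_zero hg] using h3
  have h6 : Φ t / l = l⁻¹ * Φ t := by field_simp
  linarith

end AuxLemmas

/-- Pointwise estimate for functions in the Bergman–Orlicz space `A_α^Φ(ℂ₊)`. -/
theorem bergman_pointwise_estimate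
    (Φ : ℝ → ℝ) (α : ℝ) (hα : -1 < α)
    (hg : IsGrowth Φ) (hc : ConvexOn ℝ (Ici 0) Φ) :
    ∃ C > (0 : ℝ), ∀ f : ℂ → ℂ, MemBergman Φ α f → ∀ z ∈ UHP,
      ‖f z‖ ≤ C * invF Φ (1 / z.im ^ (α + 2)) * (bergLux Φ α f).toReal := by
  obtain ⟨hΦcont, hΦmono, hΦmap, hΦsurj⟩ := hg
  have hg' : IsGrowth Φ := ⟨hΦcont, hΦmono, hΦmap, hΦsurj⟩
  set cα : ℝ := min (((1:ℝ)/2) ^ α) (((3:ℝ)/2) ^ α) with hcα_def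
  have hcα : 0 < cα :=
    lt_min (Real.rpow_pos_of_pos (by norm_num) α) (Real.rpow_pos_of_pos (by norm_num) α)
  set K : ℝ := 4 / (π * cα) with hK_def
  have hK : 0 < K := div_pos (by norm_num) (mul_pos Real.pi_pos hcα)
  have hmax1 : (1:ℝ) ≤ max 1 K := le_max_left _ _
  refine ⟨2 * max 1 K, by nlinarith, ?_⟩
  intro f hf z hz
  set Mc : ℝ := 2 * max 1 K with hMc_def
  have hMc1 : (1:ℝ) ≤ Mc := by rw [hMc_def]; linarith
  have hMcK : K < Mc := by
    rw [hMc_def]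
    have := le_max_right (1:ℝ) K
    linarith
  set y := z.im with hy_def
  have hy : 0 < y := hz
  set s : ℝ := 1 / y ^ (α + 2) with hs_def
  have hs_pos : 0 < s := div_pos one_pos (Real.rpow_pos_of_pos hy _)
  set r : ℝ := y / 2 with hr_def
  have hr : 0 < r := by rw [hr_def]; linarith
  have hUHPopen : IsOpen UHP := isOpen_lt continuous_const Complex.continuous_im
  have him : ∀ w ∈ Metric.closedBall z r, y / 2 ≤ w.im ∧ w.im ≤ 3 * y / 2 := by
    intro w hw
    rw [Metric.mem_closedBall, Complex.dist_eq] at hw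
    have h1 : |(w - z).im| ≤ ‖w - z‖ := Complex.abs_im_le_norm _
    rw [Complex.sub_im] at h1
    have h2 : |w.im - y| ≤ r := le_trans h1 hw
    rw [abs_le] at h2
    exact ⟨by linarith [h2.1], by linarith [h2.2]⟩
  have hball : Metric.closedBall z r ⊆ UHP := by
    intro w hw
    have := (him w hw).1
    show 0 < w.im
    linarith
  have hball' : Metric.ball z r ⊆ UHP := Metric.ball_subset_closedBall.trans hball
  have hV0 : (0:ℝ) < π * r ^ 2 := by positivity
  -- Step B: the pointwise bound for any admissible λ
  have stepB : ∀ l : ℝ, 0 < l →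
      (∫⁻ x, ENNReal.ofReal (Φ (‖f x‖ / l)) ∂(bergMeasure α)) ≤ 1 →
      ‖f z‖ ≤ Mc * invF Φ s * l := by
    intro l hl hadm
    have hfc : ContinuousOn f (Metric.closedBall z r) := hf.1.continuousOn.mono hball
    have hdiff : ∀ w ∈ Metric.ball z r, DifferentiableAt ℂ f w := fun w hw =>
      hf.1.differentiableAt (hUHPopen.mem_nhds (hball' hw))
    have habs : ContinuousOn (fun w => ‖f w‖ / l) (Metric.closedBall z r) :=
      (continuous_norm.comp_continuousOn hfc).div_const l
    have hmaps : MapsTo (fun w => ‖f w‖ / l) (Metric.closedBall z r) (Ici 0) :=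
      fun w _ => mem_Ici.mpr (div_nonneg (norm_nonneg _) hl.le)
    have hgc : ContinuousOn (fun w => Φ (‖f w‖ / l)) (Metric.closedBall z r) :=
      hΦcont.comp habs hmaps
    have hFia : IntegrableOn (fun w => ‖f w‖ / l) (Metric.ball z r) volume :=
      (habs.integrableOn_compact (isCompact_closedBall z r)).mono_set
        Metric.ball_subset_closedBall
    have hgia : IntegrableOn (fun w => Φ (‖f w‖ / l)) (Metric.ball z r) volume :=
      (hgc.integrableOn_compact (isCompact_closedBall z r)).mono_set
        Metric.ball_subset_closedBall
    have hmv : ∫ w in Metric.ball z r, f w = (π * r ^ 2 : ℝ) • f z := diskMean f z hr hfc hdiff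
    have hV : (volume (Metric.ball z r)).toReal = π * r ^ 2 := volBall z hr
    have hmv2 : π * r ^ 2 * ‖f z‖ ≤ ∫ w in Metric.ball z r, ‖f w‖ := by
      have h1 : ‖∫ w in Metric.ball z r, f w‖ ≤ ∫ w in Metric.ball z r, ‖f w‖ :=
        norm_integral_le_integral_norm _
      rw [hmv, norm_smul, Real.norm_eq_abs, _root_.abs_of_pos hV0] at h1
      simpa using h1
    haveI hfinm : IsFiniteMeasure (volume.restrict (Metric.ball z r)) :=
      ⟨by rw [Measure.restrict_apply_univ]; exact measure_ball_lt_top⟩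
    haveI hnem : NeZero (volume.restrict (Metric.ball z r)) :=
      ⟨fun h => (Metric.measure_ball_pos volume z hr).ne' (Measure.restrict_eq_zero.mp h)⟩
    have hjen := hc.map_average_le hΦcont isClosed_Ici
      (Filter.Eventually.of_forall fun w => mem_Ici.mpr
        (div_nonneg (norm_nonneg _) hl.le)) hFia hgia
    have hintnn : 0 ≤ ∫ w in Metric.ball z r, ‖f w‖ :=
      setIntegral_nonneg measurableSet_ball fun w _ => norm_nonneg _
    have havgF : ⨍ w, (‖f w‖ / l) ∂(volume.restrict (Metric.ball z r))
        = (π * r ^ 2)⁻¹ * ((∫ w in Metric.ball z r, ‖f w‖) / l) := by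
      rw [average_eq, Measure.real, Measure.restrict_apply_univ, hV, smul_eq_mul, integral_div]
    have havgg : ⨍ w, Φ (‖f w‖ / l) ∂(volume.restrict (Metric.ball z r))
        = (π * r ^ 2)⁻¹ * ∫ w in Metric.ball z r, Φ (‖f w‖ / l) := by
      rw [average_eq, Measure.real, Measure.restrict_apply_univ, hV, smul_eq_mul]
    have key : ‖f z‖ ≤ (π * r ^ 2)⁻¹ * ∫ w in Metric.ball z r, ‖f w‖ := by
      have h2 := mul_le_mul_of_nonneg_left hmv2 (inv_nonneg.mpr hV0.le)
      rwa [← mul_assoc, inv_mul_cancel₀ hV0.ne', one_mul] at h2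
    have hle1 : ‖f z‖ / l
        ≤ ⨍ w, (‖f w‖ / l) ∂(volume.restrict (Metric.ball z r)) := by
      rw [havgF, ← mul_div_assoc]
      gcongr
    have havgF_nonneg :
        0 ≤ ⨍ w, (‖f w‖ / l) ∂(volume.restrict (Metric.ball z r)) := by
      rw [havgF]
      exact mul_nonneg (inv_nonneg.mpr hV0.le) (div_nonneg hintnn hl.le)
    have step1 : Φ (‖f z‖ / l)
        ≤ Φ (⨍ w, (‖f w‖ / l) ∂(volume.restrict (Metric.ball z r))) :=
      hΦmono (mem_Ici.mpr (div_nonneg (norm_nonneg _) hl.le))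
        (mem_Ici.mpr havgF_nonneg) hle1
    have havg_le : Φ (‖f z‖ / l)
        ≤ (π * r ^ 2)⁻¹ * ∫ w in Metric.ball z r, Φ (‖f w‖ / l) := by
      rw [← havgg]
      exact step1.trans hjen
    -- comparison of measures
    have hΦnonneg : ∀ w : ℂ, 0 ≤ Φ (‖f w‖ / l) := fun w =>
      hΦmap (mem_Ici.mpr (div_nonneg (norm_nonneg _) hl.le))
    have hlow : ∀ w ∈ Metric.ball z r,
        ENNReal.ofReal (cα * y ^ α) ≤ ENNReal.ofReal (w.im ^ α) := by
      intro w hw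
      obtain ⟨hw1, hw2⟩ := him w (Metric.ball_subset_closedBall hw)
      apply ENNReal.ofReal_le_ofReal
      rcases le_or_gt 0 α with hα0 | hα0
      · calc cα * y ^ α ≤ ((1:ℝ)/2) ^ α * y ^ α :=
              mul_le_mul_of_nonneg_right (min_le_left _ _) (Real.rpow_nonneg hy.le _)
          _ = ((1:ℝ)/2 * y) ^ α := (Real.mul_rpow (by norm_num) hy.le).symm
          _ ≤ w.im ^ α := Real.rpow_le_rpow (by positivity) (by linarith) hα0
      · calc cα * y ^ α ≤ ((3:ℝ)/2) ^ α * y ^ α :=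
              mul_le_mul_of_nonneg_right (min_le_right _ _) (Real.rpow_nonneg hy.le _)
          _ = ((3:ℝ)/2 * y) ^ α := (Real.mul_rpow (by norm_num) hy.le).symm
          _ ≤ w.im ^ α := Real.rpow_le_rpow_of_nonpos (by linarith) (by linarith) hα0.le
    have hDae : AEMeasurable (fun w : ℂ => ENNReal.ofReal (w.im ^ α))
        (volume.restrict (Metric.ball z r)) := by
      have hd : ContinuousOn (fun w : ℂ => w.im ^ α) (Metric.ball z r) :=
        ContinuousOn.rpow_const Complex.continuous_im.continuousOn fun w hw =>
          Or.inl (ne_of_gt (by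
            have := (him w (Metric.ball_subset_closedBall hw)).1
            linarith))
      exact ENNReal.measurable_ofReal.comp_aemeasurable (hd.aemeasurable measurableSet_ball)
    have hgae : AEMeasurable (fun w : ℂ => ENNReal.ofReal (Φ (‖f w‖ / l)))
        (volume.restrict (Metric.ball z r)) :=
      ENNReal.measurable_ofReal.comp_aemeasurable
        ((hgc.mono Metric.ball_subset_closedBall).aemeasurable measurableSet_ball)
    have hrestr : (bergMeasure α).restrict (Metric.ball z r)
        = (volume.restrict (Metric.ball z r)).withDensity
          fun w => ENNReal.ofReal (w.im ^ α) := by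
      simp only [bergMeasure]
      rw [restrict_withDensity measurableSet_ball,
        Measure.restrict_restrict measurableSet_ball, Set.inter_eq_left.mpr hball']
    have hzint : ∫⁻ w in Metric.ball z r,
          ENNReal.ofReal (Φ (‖f w‖ / l)) ∂(bergMeasure α)
        = ∫⁻ w in Metric.ball z r,
            ENNReal.ofReal (w.im ^ α) * ENNReal.ofReal (Φ (‖f w‖ / l)) ∂volume := by
      rw [hrestr, lintegral_withDensity_eq_lintegral_mul₀ hDae hgae]
      rfl
    have hmain : ENNReal.ofReal (cα * y ^ α)
        * ENNReal.ofReal (∫ w in Metric.ball z r, Φ (‖f w‖ / l)) ≤ 1 := by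
      rw [ofReal_integral_eq_lintegral_ofReal hgia
        (Filter.Eventually.of_forall fun w => hΦnonneg w)]
      rw [← lintegral_const_mul' _ _ ENNReal.ofReal_ne_top]
      calc ∫⁻ w in Metric.ball z r,
            ENNReal.ofReal (cα * y ^ α) * ENNReal.ofReal (Φ (‖f w‖ / l)) ∂volume
          ≤ ∫⁻ w in Metric.ball z r,
              ENNReal.ofReal (w.im ^ α) * ENNReal.ofReal (Φ (‖f w‖ / l)) ∂volume :=
            setLIntegral_mono' measurableSet_ball fun w hw =>
              mul_le_mul_left (hlow w hw) _
        _ = ∫⁻ w in Metric.ball z r,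
              ENNReal.ofReal (Φ (‖f w‖ / l)) ∂(bergMeasure α) := hzint.symm
        _ ≤ ∫⁻ w, ENNReal.ofReal (Φ (‖f w‖ / l)) ∂(bergMeasure α) :=
            setLIntegral_le_lintegral _ _
        _ ≤ 1 := hadm
    have hcy : 0 < cα * y ^ α := mul_pos hcα (Real.rpow_pos_of_pos hy α)
    have hIball : ∫ w in Metric.ball z r, Φ (‖f w‖ / l) ≤ 1 / (cα * y ^ α) := by
      rw [← ENNReal.ofReal_mul hcy.le] at hmain
      have h2 := ENNReal.ofReal_le_one.mp hmain
      rw [le_div_iff₀ hcy]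
      linarith
    have hΦu : Φ (‖f z‖ / l) ≤ K * s := by
      have h1 := havg_le.trans (mul_le_mul_of_nonneg_left hIball (inv_nonneg.mpr hV0.le))
      have heq : (π * r ^ 2)⁻¹ * (1 / (cα * y ^ α)) = K * s := by
        have hy2 : y ^ (α + 2) = y ^ α * y ^ 2 := by
          rw [Real.rpow_add hy, Real.rpow_two]
        have hyα := Real.rpow_pos_of_pos hy α
        rw [hK_def, hs_def, hr_def, hy2]
        have hπ : (π:ℝ) ≠ 0 := Real.pi_pos.ne'
        field_simp
        ring
      exact heq ▸ h1
    have hΦu2 : Φ (‖f z‖ / l) < Mc * s :=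
      lt_of_le_of_lt hΦu (mul_lt_mul_of_pos_right hMcK hs_pos)
    have hu2 : ‖f z‖ / l ≤ invF Φ (Mc * s) :=
      le_invF hg' (div_nonneg (norm_nonneg _) hl.le) hΦu2
    have hu3 := hu2.trans (invF_scale hg' hc hMc1 hs_pos.le)
    rw [div_le_iff₀ hl] at hu3
    exact hu3
  -- Step A: there exists an admissible λ
  set l₀ : ℝ := max 1 (∫⁻ w, ENNReal.ofReal (Φ (‖f w‖)) ∂(bergMeasure α)).toReal
    with hl₀_def
  have hl₀1 : (1:ℝ) ≤ l₀ := le_max_left _ _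
  have hl₀ : 0 < l₀ := lt_of_lt_of_le one_pos hl₀1
  have hl₀ne : ENNReal.ofReal l₀ ≠ 0 := by
    simp only [ne_eq, ENNReal.ofReal_eq_zero, not_le]
    linarith
  have hadm₀ : ∫⁻ x, ENNReal.ofReal (Φ (‖f x‖ / l₀)) ∂(bergMeasure α) ≤ 1 := by
    have hpt : ∀ w : ℂ, ENNReal.ofReal (Φ (‖f w‖ / l₀))
        ≤ (ENNReal.ofReal l₀)⁻¹ * ENNReal.ofReal (Φ (‖f w‖)) := by
      intro w
      have h1 : Φ (‖f w‖ / l₀) ≤ Φ (‖f w‖) / l₀ :=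
        phi_div_le hg' hc (norm_nonneg _) hl₀1
      calc ENNReal.ofReal (Φ (‖f w‖ / l₀))
          ≤ ENNReal.ofReal (Φ (‖f w‖) / l₀) := ENNReal.ofReal_le_ofReal h1
        _ = ENNReal.ofReal (Φ (‖f w‖)) / ENNReal.ofReal l₀ :=
            ENNReal.ofReal_div_of_pos hl₀
        _ = (ENNReal.ofReal l₀)⁻¹ * ENNReal.ofReal (Φ (‖f w‖)) := by
            rw [ENNReal.div_eq_inv_mul]
    calc ∫⁻ x, ENNReal.ofReal (Φ (‖f x‖ / l₀)) ∂(bergMeasure α)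
        ≤ ∫⁻ x, (ENNReal.ofReal l₀)⁻¹ * ENNReal.ofReal (Φ (‖f x‖))
            ∂(bergMeasure α) := lintegral_mono hpt
      _ = (ENNReal.ofReal l₀)⁻¹
            * ∫⁻ x, ENNReal.ofReal (Φ (‖f x‖)) ∂(bergMeasure α) :=
          lintegral_const_mul' _ _ (ENNReal.inv_ne_top.mpr hl₀ne)
      _ ≤ (ENNReal.ofReal l₀)⁻¹ * ENNReal.ofReal l₀ :=
          mul_le_mul_right ((ENNReal.le_ofReal_iff_toReal_le hf.2.ne (by linarith)).mpr
            (le_max_right _ _)) _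
      _ = 1 := ENNReal.inv_mul_cancel hl₀ne ENNReal.ofReal_ne_top
  have hinv_pos : 0 < invF Φ s := by
    obtain ⟨h0, hΦ0⟩ := invF_mem hg' hs_pos.le
    rcases h0.lt_or_eq with h | h
    · exact h
    · exfalso
      rw [← h, phi_zero hg'] at hΦ0
      linarith
  have hW : 0 < Mc * invF Φ s := mul_pos (by linarith) hinv_pos
  have hble : ENNReal.ofReal (‖f z‖ / (Mc * invF Φ s)) ≤ bergLux Φ α f := by
    simp only [bergLux, luxNorm]
    refine le_iInf fun l => le_iInf fun hl => ?_
    apply ENNReal.ofReal_le_ofReal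
    rw [div_le_iff₀ hW, mul_comm l (Mc * invF Φ s)]
    exact stepB l hl.1 hl.2
  have hfin2 : bergLux Φ α f ≠ ⊤ := by
    have hle : bergLux Φ α f ≤ ENNReal.ofReal l₀ := by
      simp only [bergLux, luxNorm]
      exact iInf_le_of_le l₀ (iInf_le_of_le ⟨hl₀, hadm₀⟩ le_rfl)
    exact ne_top_of_le_ne_top ENNReal.ofReal_ne_top hle
  have hmono2 := ENNReal.toReal_mono hfin2 hble
  rw [ENNReal.toReal_ofReal (div_nonneg (norm_nonneg _) hW.le)] at hmono2
  rw [div_le_iff₀ hW] at hmono2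
  calc ‖f z‖ ≤ (bergLux Φ α f).toReal * (Mc * invF Φ s) := hmono2
    _ = Mc * invF Φ s * (bergLux Φ α f).toReal := by ring
end
end
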